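/- Let x, v : [0,∞) → E be continuously differentiable curves satisfying x'(t) = P(x(t)) v(t) and v'(t) = -k·b(d(x(t))) • (v(t) - ν(x(t))) + (Dν(x(t)))(P(x(t)) v(t)) with k > 0. Assume: v is continuous; d is continuous on the unit sphere and differentiable at every unit y with 0 < d(y) ≤ δ_u, with (d∘x)'(t) = ⟪∇d(x(t)), x'(t)⟫ whenever 0 < d(x(t)) ≤ δ_u; ‖P(y) ∇d(y)‖ ≤ D_d for every unit y with 0 < d(y) ≤ δ_u; ⟪∇d(y), ν(y)⟫ ≥ μ for every unit y with 0 < d(y) ≤ δ_d; ⟪y, ν(y)⟫ = 0 and ‖ν(y)‖ ≤ D₁ for every unit y with d(y) > 0; b(s) = 1/s for s ∈ (0, ε₁] and b(s) > 0 for s > 0, with 0 < ε₁ < δ_u; ν is differentiable at x(t) for every t. If ‖x(0)‖ = 1 and d(x(0)) > 0, then for all t ≥ 0 one has ‖x(t)‖ = 1 and d(x(t)) > 0; that is, the free state space M × E, with M = {y ∈ E : ‖y‖ = 1 and d(y) > 0}, is forward invariant for the closed-loop system. -/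

import Mathlib

/-!
The sphere is invariant because `‖x‖² - 1` solves a linear equation with zero initial value.
If `d ∘ x` had a first zero `τ`, then just before `τ` the damping is `b (d x) = 1 / d x` and
`d (x s) ≤ L (τ - s)` since `(d ∘ x)' = ⟪P ∇d, v⟫ ≥ -L`. The relative velocity `w = v - ν x` obeys
`w' = -k b w`, so `‖w‖² ≤ C (τ - s)^(2k/L) → 0`. Then
`(d ∘ x)' = ⟪P ∇d, w⟫ + ⟪∇d, ν⟫ ≥ μ - D_d ‖w‖ ≥ 0` just before `τ`, so `d ∘ x` cannot
decrease to `0`.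
-/

open scoped RealInnerProductSpace

/-- Orthogonal projection onto the tangent space of the unit sphere at `x`:
`P(x) v = v - ⟪x, v⟫ • x`. -/
noncomputable def sproj {F : Type*} [NormedAddCommGroup F] [InnerProductSpace ℝ F]
    (x v : F) : F :=
  v - ⟪x, v⟫ • x

open Set Filter Topology

section Projection

variable {F : Type*} [NormedAddCommGroup F] [InnerProductSpace ℝ F]

lemma inner_sproj_right_comm (y g u : F) : ⟪g, sproj y u⟫ = ⟪sproj y g, u⟫ := by
  simp only [sproj, inner_sub_left, inner_sub_right, real_inner_smul_left,
    real_inner_smul_right, real_inner_comm g y]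
  ring

lemma inner_self_sproj (y u : F) : ⟪y, sproj y u⟫ = ⟪y, u⟫ * (1 - ‖y‖ ^ 2) := by
  rw [sproj, inner_sub_right, real_inner_smul_right, real_inner_self_eq_norm_sq]
  ring

lemma sproj_of_inner_eq_zero {y u : F} (h : ⟪y, u⟫ = 0) : sproj y u = u := by
  simp [sproj, h]

lemma neg_mul_le_inner_sproj {y g u : F} {D V : ℝ} (hg : ‖sproj y g‖ ≤ D) (hu : ‖u‖ ≤ V) :
    -(D * V) ≤ ⟪g, sproj y u⟫ := by
  rw [inner_sproj_right_comm]
  calc -(D * V) ≤ -(‖sproj y g‖ * ‖u‖) :=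
        neg_le_neg (mul_le_mul hg hu (norm_nonneg _) ((norm_nonneg _).trans hg))
    _ ≤ ⟪sproj y g, u⟫ := (abs_le.1 (abs_real_inner_le_norm _ _)).1

lemma sub_mul_norm_sub_le_inner_sproj {y g u n : F} {D μ : ℝ} (hn : ⟪y, n⟫ = 0)
    (hg : ‖sproj y g‖ ≤ D) (hμ : μ ≤ ⟪g, n⟫) : μ - D * ‖u - n‖ ≤ ⟪g, sproj y u⟫ := by
  have hsplit : ⟪g, sproj y u⟫ = ⟪sproj y g, u - n⟫ + ⟪g, n⟫ := by
    rw [inner_sub_right, ← inner_sproj_right_comm, ← inner_sproj_right_comm,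
      sproj_of_inner_eq_zero hn]
    ring
  have hbound : -(D * ‖u - n‖) ≤ ⟪sproj y g, u - n⟫ := by
    simpa only [inner_sproj_right_comm] using neg_mul_le_inner_sproj (u := u - n) hg le_rfl
  linarith

theorem norm_eq_one_of_hasDerivAt_sproj {x v : ℝ → F} (hv : ContinuousOn v (Ici 0))
    (hx : ∀ t, 0 ≤ t → HasDerivAt x (sproj (x t) (v t)) t) (h0 : ‖x 0‖ = 1) :
    ∀ t, 0 ≤ t → ‖x t‖ = 1 := by
  intro t ht
  have hderiv : ∀ s, 0 ≤ s →
      HasDerivAt (fun s => ‖x s‖ ^ 2 - 1) (-(2 * ⟪x s, v s⟫) * (‖x s‖ ^ 2 - 1)) s := by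
    intro s hs
    refine ((hx s hs).norm_sq.sub_const 1).congr_deriv ?_
    rw [inner_self_sproj]
    ring
  obtain ⟨K, hK⟩ : ∃ K, ∀ s ∈ Icc 0 t, ‖-(2 * ⟪x s, v s⟫)‖ ≤ K :=
    isCompact_Icc.exists_bound_of_continuousOn <| ContinuousOn.neg <|
      continuousOn_const.mul <| ContinuousOn.inner
        (fun s hs => (hx s hs.1).continuousAt.continuousWithinAt)
        (hv.mono Icc_subset_Ici_self)
  have hzero := eq_zero_of_abs_deriv_le_mul_abs_self_of_eq_zero_right
    (fun s hs => (hderiv s hs.1).continuousAt.continuousWithinAt)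
    (fun s hs => (hderiv s hs.1).hasDerivWithinAt) (by simp [h0])
    (fun s hs => by
      rw [norm_mul]
      exact mul_le_mul_of_nonneg_right (hK s (Ico_subset_Icc_self hs)) (norm_nonneg _))
    t ⟨ht, le_rfl⟩
  have : ‖x t‖ ^ 2 = 1 ^ 2 := by linarith
  exact (pow_left_inj₀ (norm_nonneg _) zero_le_one two_ne_zero).1 this

end Projection

lemma exists_Ioo_mem_Ioo_before_first_zero {φ : ℝ → ℝ} {a t ε : ℝ} (hat : a ≤ t)
    (hφ : ContinuousOn φ (Icc a t)) (ha : 0 < φ a) (ht : φ t ≤ 0) (hε : 0 < ε) :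
    ∃ t₀ τ, a ≤ t₀ ∧ t₀ < τ ∧ τ ≤ t ∧ φ τ = 0 ∧ ∀ s ∈ Ioo t₀ τ, φ s ∈ Ioo 0 ε := by
  set S := Icc a t ∩ φ ⁻¹' Iic 0
  have hSne : S.Nonempty := ⟨t, ⟨hat, le_rfl⟩, ht⟩
  have hSbdd : BddBelow S := ⟨a, fun s hs => hs.1.1⟩
  have hτS : sInf S ∈ S :=
    (hφ.preimage_isClosed_of_isClosed isClosed_Icc isClosed_Iic).csInf_mem hSne hSbdd
  set τ := sInf S
  have hpos : ∀ s ∈ Ico a τ, 0 < φ s := fun s hs =>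
    not_le.1 fun h => (csInf_le hSbdd ⟨⟨hs.1, hs.2.le.trans hτS.1.2⟩, h⟩).not_gt hs.2
  have haτ : a < τ := hτS.1.1.lt_of_ne fun h => (h ▸ hτS.2).not_gt ha
  have hτ0 : φ τ = 0 := by
    obtain ⟨c, hc, hc0⟩ := intermediate_value_Icc' hτS.1.1
      (hφ.mono (Icc_subset_Icc_right hτS.1.2)) ⟨hτS.2, ha.le⟩
    obtain rfl | hcτ := hc.2.eq_or_lt
    · exact hc0
    · exact absurd hc0 (hpos c ⟨hc.1, hcτ⟩).ne'
  obtain ⟨δ, hδ, hclose⟩ := Metric.continuousWithinAt_iff.1 (hφ τ hτS.1) ε hε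
  refine ⟨max a (τ - δ), τ, le_max_left _ _, max_lt haτ (by linarith), hτS.1.2, hτ0,
    fun s hs => ⟨hpos s ⟨(le_max_left _ _).trans hs.1.le, hs.2⟩, ?_⟩⟩
  have hs' : s ∈ Icc a t := ⟨(le_max_left _ _).trans hs.1.le, hs.2.le.trans hτS.1.2⟩
  have hdist : dist s τ < δ := by
    rw [Real.dist_eq, abs_sub_comm, abs_of_pos (sub_pos.2 hs.2)]
    linarith [le_max_right a (τ - δ), hs.1]
  simpa [Real.dist_eq, hτ0] using (le_abs_self _).trans_lt (hclose hs' hdist)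

/-- `q s * (τ - s) ^ (-c / L)` is nonincreasing: `φ ≤ L (τ - s)` makes the damping rate
`c / φ` at least `(c / L) / (τ - s)`. -/
lemma tendsto_nhdsLT_zero_of_hasDerivAt_neg_div_mul {φ q : ℝ → ℝ} {t₀ τ c L : ℝ}
    (hτ : t₀ < τ) (hc : 0 < c) (hL : 0 < L)
    (hφ : ∀ s ∈ Ioo t₀ τ, 0 < φ s ∧ φ s ≤ L * (τ - s))
    (hq : ∀ s ∈ Ioo t₀ τ, HasDerivAt q (-(c / φ s) * q s) s)
    (hq0 : ∀ s ∈ Ioo t₀ τ, 0 ≤ q s) :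
    Tendsto q (𝓝[<] τ) (𝓝 0) := by
  set α := c / L
  have hα : 0 < α := div_pos hc hL
  have hG : ∀ s ∈ Ioo t₀ τ, HasDerivAt (fun s => q s * (τ - s) ^ (-α))
      (q s * (τ - s) ^ (-α - 1) * (α - c * (τ - s) / φ s)) s := by
    intro s hs
    have hτs : 0 < τ - s := sub_pos.2 hs.2
    have hpow : HasDerivAt (fun s => (τ - s) ^ (-α)) (α * (τ - s) ^ (-α - 1)) s := by
      refine ((Real.hasDerivAt_rpow_const (Or.inl hτs.ne')).comp s
        ((hasDerivAt_id s).const_sub τ)).congr_deriv ?_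
      ring
    refine ((hq s hs).mul hpow).congr_deriv ?_
    rw [Real.rpow_sub_one hτs.ne']
    field_simp
    ring
  have hanti : AntitoneOn (fun s => q s * (τ - s) ^ (-α)) (Ioo t₀ τ) := by
    refine antitoneOn_of_deriv_nonpos (convex_Ioo t₀ τ)
      (fun s hs => (hG s hs).continuousAt.continuousWithinAt) ?_ ?_
    · rw [interior_Ioo]
      exact fun s hs => (hG s hs).differentiableAt.differentiableWithinAt
    · rw [interior_Ioo]
      intro s hs
      rw [(hG s hs).deriv]
      have hτs : 0 < τ - s := sub_pos.2 hs.2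
      have hrate : α ≤ c * (τ - s) / φ s := by
        rw [le_div_iff₀ (hφ s hs).1]
        calc α * φ s ≤ α * (L * (τ - s)) := mul_le_mul_of_nonneg_left (hφ s hs).2 hα.le
          _ = c * (τ - s) := by rw [← mul_assoc, div_mul_cancel₀ c hL.ne']
      exact mul_nonpos_of_nonneg_of_nonpos
        (mul_nonneg (hq0 s hs) (Real.rpow_nonneg hτs.le _)) (sub_nonpos.2 hrate)
  obtain ⟨t₁, ht₁⟩ := nonempty_Ioo.2 hτ
  set C := q t₁ * (τ - t₁) ^ (-α)
  have hbound : ∀ s ∈ Ioo t₁ τ, q s ≤ C * (τ - s) ^ α := by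
    intro s hs
    have hτs : 0 < τ - s := sub_pos.2 hs.2
    have h := hanti ht₁ ⟨ht₁.1.trans hs.1, hs.2⟩ hs.1.le
    calc q s = q s * (τ - s) ^ (-α) * (τ - s) ^ α := by
          rw [mul_assoc, ← Real.rpow_add hτs, neg_add_cancel, Real.rpow_zero, mul_one]
      _ ≤ C * (τ - s) ^ α := mul_le_mul_of_nonneg_right h (Real.rpow_nonneg hτs.le _)
  have hlim : Tendsto (fun s => C * (τ - s) ^ α) (𝓝[<] τ) (𝓝 0) := by
    have : ContinuousAt (fun s => C * (τ - s) ^ α) τ :=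
      continuousAt_const.mul ((Real.continuousAt_rpow_const _ _ (Or.inr hα.le)).comp
        (continuousAt_const.sub continuousAt_id))
    simpa [Real.zero_rpow hα.ne'] using this.tendsto.mono_left nhdsWithin_le_nhds
  refine tendsto_of_tendsto_of_tendsto_of_le_of_le' tendsto_const_nhds hlim ?_ ?_
  · filter_upwards [Ioo_mem_nhdsLT ht₁.2] with s hs using hq0 s ⟨ht₁.1.trans hs.1, hs.2⟩
  · filter_upwards [Ioo_mem_nhdsLT ht₁.2] with s hs using hbound s hs

theorem false_of_damped_approach_zero {φ φ' q : ℝ → ℝ} {t₀ τ c L m : ℝ} (hτ : t₀ < τ)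
    (hc : 0 < c) (hm : 0 < m) (hφc : ContinuousOn φ (Icc t₀ τ)) (hφτ : φ τ = 0)
    (hφpos : ∀ s ∈ Ioo t₀ τ, 0 < φ s) (hφ' : ∀ s ∈ Ioo t₀ τ, HasDerivAt φ (φ' s) s)
    (hφ'L : ∀ s ∈ Ioo t₀ τ, -L ≤ φ' s) (hφ'q : ∀ s ∈ Ioo t₀ τ, q s ≤ m → 0 ≤ φ' s)
    (hq : ∀ s ∈ Ioo t₀ τ, HasDerivAt q (-(c / φ s) * q s) s)
    (hq0 : ∀ s ∈ Ioo t₀ τ, 0 ≤ q s) : False := by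
  have hdiff : DifferentiableOn ℝ φ (Ioo t₀ τ) :=
    fun s hs => (hφ' s hs).differentiableAt.differentiableWithinAt
  have hlin : ∀ s ∈ Ioo t₀ τ, φ s ≤ max L 1 * (τ - s) := by
    intro s hs
    have := (convex_Icc t₀ τ).mul_sub_le_image_sub_of_le_deriv hφc
      (by rwa [interior_Icc]) (C := -max L 1)
      (fun r hr => by
        rw [interior_Icc] at hr
        rw [(hφ' r hr).deriv]
        exact (neg_le_neg (le_max_left L 1)).trans (hφ'L r hr))
      s (Ioo_subset_Icc_self hs) τ (right_mem_Icc.2 hτ.le) hs.2.le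
    linarith
  have hqlim := tendsto_nhdsLT_zero_of_hasDerivAt_neg_div_mul hτ hc
    (lt_max_of_lt_right one_pos) (fun s hs => ⟨hφpos s hs, hlin s hs⟩) hq hq0
  obtain ⟨t₁, ht₁τ, ht₁⟩ := (mem_nhdsLT_iff_exists_Ioo_subset' hτ).1
    (inter_mem (hqlim.eventually (eventually_le_nhds hm)) (Ioo_mem_nhdsLT hτ))
  obtain ⟨t₂, ht₂⟩ := nonempty_Ioo.2 (mem_Iio.1 ht₁τ)
  have hsub : Ioo t₂ τ ⊆ Ioo t₁ τ := Ioo_subset_Ioo_left ht₂.1.le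
  have hmono := (convex_Icc t₂ τ).mul_sub_le_image_sub_of_le_deriv (C := 0)
    (hφc.mono (Icc_subset_Icc_left (ht₁ ⟨ht₂.1, ht₂.2⟩).2.1.le))
    (by rw [interior_Icc]; exact hdiff.mono fun s hs => (ht₁ (hsub hs)).2)
    (fun s hs => by
      rw [interior_Icc] at hs
      obtain ⟨hqm, hs'⟩ := ht₁ (hsub hs)
      rw [(hφ' s hs').deriv]
      exact hφ'q s hs' hqm)
    t₂ (left_mem_Icc.2 ht₂.2.le) τ (right_mem_Icc.2 ht₂.2.le) ht₂.2.le
  linarith [hφpos t₂ (ht₁ ht₂).2]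

theorem forward_invariance_claim1_general
    (n : ℕ)
    (d : EuclideanSpace ℝ (Fin (n+1)) → ℝ)
    (ν : EuclideanSpace ℝ (Fin (n+1)) → EuclideanSpace ℝ (Fin (n+1)))
    (b : ℝ → ℝ)
    (μ D_d δ_d δ_u ε₁ k : ℝ)
    (hμ : 0 < μ) (hDd : 0 < D_d) (hδd : 0 < δ_d) (hε₁ : 0 < ε₁) (hε₁u : ε₁ < δ_u)
    (hk : 0 < k)
    (x v : ℝ → EuclideanSpace ℝ (Fin (n+1)))
    -- v is continuous
    (hv_cont : Continuous v)
    -- closed-loop dynamics: x' = P(x) v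
    (hx_ode : ∀ t : ℝ, 0 ≤ t → HasDerivAt x (sproj (x t) (v t)) t)
    -- v' = -k b(d(x)) (v - ν(x)) + Dν(x) (P(x) v)
    (hv_ode : ∀ t : ℝ, 0 ≤ t →
      HasDerivAt v
        (-(k * b (d (x t))) • (v t - ν (x t)) +
          fderiv ℝ ν (x t) (sproj (x t) (v t))) t)
    -- (i) d continuous on the unit sphere, differentiable near the unsafe set,
    -- and chain rule along the curve
    (hd_cont : ContinuousOn d (Metric.sphere (0 : EuclideanSpace ℝ (Fin (n+1))) 1))
    (hd_chain : ∀ t : ℝ, 0 ≤ t → 0 < d (x t) → d (x t) ≤ δ_u →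
      HasDerivAt (fun s => d (x s)) ⟪gradient d (x t), sproj (x t) (v t)⟫ t)
    -- (ii) bounded projected gradient near the unsafe set
    (hgrad_bdd : ∀ y : EuclideanSpace ℝ (Fin (n+1)), ‖y‖ = 1 →
      0 < d y → d y ≤ δ_u → ‖sproj y (gradient d y)‖ ≤ D_d)
    -- (iii) the desired vector field points away from the unsafe set
    (hmove : ∀ y : EuclideanSpace ℝ (Fin (n+1)), ‖y‖ = 1 →
      0 < d y → d y ≤ δ_d → μ ≤ ⟪gradient d y, ν y⟫)
    -- (iv) ν is tangent and bounded on the free space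
    (hν_tangent : ∀ y : EuclideanSpace ℝ (Fin (n+1)), ‖y‖ = 1 → 0 < d y → ⟪y, ν y⟫ = 0)
    -- (v) damping profile
    (hb_eq : ∀ s : ℝ, 0 < s → s ≤ ε₁ → b s = 1 / s)
    -- (vi) ν differentiable along the trajectory
    (hν_diff : ∀ t : ℝ, 0 ≤ t → DifferentiableAt ℝ ν (x t))
    -- initial condition in the free space M
    (h0_sphere : ‖x 0‖ = 1)
    (h0 : 0 < d (x 0)) :
    ∀ t : ℝ, 0 ≤ t → ‖x t‖ = 1 ∧ 0 < d (x t) := by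
  have hsphere := norm_eq_one_of_hasDerivAt_sproj hv_cont.continuousOn hx_ode h0_sphere
  refine fun t ht => ⟨hsphere t ht, not_le.1 fun hneg => ?_⟩
  have hφc : ContinuousOn (fun s => d (x s)) (Ici 0) :=
    hd_cont.comp (fun s hs => (hx_ode s hs).continuousAt.continuousWithinAt)
      fun s hs => mem_sphere_zero_iff_norm.2 (hsphere s hs)
  obtain ⟨t₀, τ, ht₀, hτ, -, hφτ, hwin⟩ := exists_Ioo_mem_Ioo_before_first_zero ht
    (hφc.mono Icc_subset_Ici_self) h0 hneg (lt_min hε₁ hδd)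
  have hwin' : ∀ s ∈ Ioo t₀ τ, 0 ≤ s ∧ ‖x s‖ = 1 ∧ 0 < d (x s) ∧ d (x s) ≤ ε₁ ∧
      d (x s) ≤ δ_d ∧ d (x s) ≤ δ_u := fun s hs =>
    have h := hwin s hs
    ⟨ht₀.trans hs.1.le, hsphere s (ht₀.trans hs.1.le), h.1, h.2.le.trans (min_le_left _ _),
      h.2.le.trans (min_le_right _ _), (h.2.le.trans (min_le_left _ _)).trans hε₁u.le⟩
  obtain ⟨V, hV⟩ :=
    isCompact_Icc.exists_bound_of_continuousOn (hv_cont.continuousOn (s := Icc t₀ τ))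
  refine false_of_damped_approach_zero (q := fun s => ‖v s - ν (x s)‖ ^ 2) (c := 2 * k)
    (L := D_d * V) (m := (μ / D_d) ^ 2) hτ (by positivity) (by positivity)
    (hφc.mono fun s hs => ht₀.trans hs.1) hφτ (fun s hs => (hwin s hs).1)
    (fun s hs => have h := hwin' s hs; hd_chain s h.1 h.2.2.1 h.2.2.2.2.2) ?_ ?_ ?_
    (fun _ _ => sq_nonneg _)
  · intro s hs
    obtain ⟨_, hs1, hpos, -, -, hu⟩ := hwin' s hs
    exact neg_mul_le_inner_sproj (hgrad_bdd _ hs1 hpos hu) (hV s (Ioo_subset_Icc_self hs))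
  · intro s hs hq
    obtain ⟨_, hs1, hpos, -, hδ, hu⟩ := hwin' s hs
    have hsmall : D_d * ‖v s - ν (x s)‖ ≤ μ := by
      rw [← le_div_iff₀' hDd]
      exact le_of_sq_le_sq hq (by positivity)
    linarith [sub_mul_norm_sub_le_inner_sproj (u := v s) (hν_tangent _ hs1 hpos)
      (hgrad_bdd _ hs1 hpos hu) (hmove _ hs1 hpos hδ)]
  · intro s hs
    obtain ⟨hs0, -, hpos, hε, -, -⟩ := hwin' s hs
    have hw : HasDerivAt (fun s => v s - ν (x s)) (-(k * b (d (x s))) • (v s - ν (x s))) s :=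
      ((hv_ode s hs0).sub ((hν_diff s hs0).hasFDerivAt.comp_hasDerivAt s
        (hx_ode s hs0))).congr_deriv (add_sub_cancel_right _ _)
    refine hw.norm_sq.congr_deriv ?_
    rw [real_inner_smul_right, real_inner_self_eq_norm_sq, hb_eq _ hpos hε]
    ring

/-- Claim 1 of Theorem 1: forward invariance of the free state space
`M × E`, with `M = {y : ‖y‖ = 1 ∧ d y > 0}`, for the closed-loop
second-order system on the n-sphere. -/
theorem forward_invariance_claim1
    (n : ℕ)
    (d : EuclideanSpace ℝ (Fin (n+1)) → ℝ)
    (ν : EuclideanSpace ℝ (Fin (n+1)) → EuclideanSpace ℝ (Fin (n+1)))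
    (b : ℝ → ℝ)
    (μ D_d D₁ δ_d δ_u ε₁ k : ℝ)
    (hμ : 0 < μ) (hDd : 0 < D_d) (hD₁ : 0 < D₁)
    (hδd : 0 < δ_d) (hδdu : δ_d ≤ δ_u) (hε₁ : 0 < ε₁) (hε₁u : ε₁ < δ_u)
    (hk : 0 < k)
    (x v : ℝ → EuclideanSpace ℝ (Fin (n+1)))
    -- x and v are continuously differentiable on [0, ∞)
    (hx_smooth : ContDiffOn ℝ 1 x (Set.Ici (0:ℝ)))
    (hv_smooth : ContDiffOn ℝ 1 v (Set.Ici (0:ℝ)))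
    -- v is continuous
    (hv_cont : Continuous v)
    -- closed-loop dynamics: x' = P(x) v
    (hx_ode : ∀ t : ℝ, 0 ≤ t → HasDerivAt x (sproj (x t) (v t)) t)
    -- v' = -k b(d(x)) (v - ν(x)) + Dν(x) (P(x) v)
    (hv_ode : ∀ t : ℝ, 0 ≤ t →
      HasDerivAt v
        (-(k * b (d (x t))) • (v t - ν (x t)) +
          fderiv ℝ ν (x t) (sproj (x t) (v t))) t)
    -- (i) d continuous on the unit sphere, differentiable near the unsafe set,
    -- and chain rule along the curve
    (hd_cont : ContinuousOn d (Metric.sphere (0 : EuclideanSpace ℝ (Fin (n+1))) 1))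
    (hd_diff : ∀ y : EuclideanSpace ℝ (Fin (n+1)), ‖y‖ = 1 →
      0 < d y → d y ≤ δ_u → DifferentiableAt ℝ d y)
    (hd_chain : ∀ t : ℝ, 0 ≤ t → 0 < d (x t) → d (x t) ≤ δ_u →
      HasDerivAt (fun s => d (x s)) ⟪gradient d (x t), sproj (x t) (v t)⟫ t)
    -- (ii) bounded projected gradient near the unsafe set
    (hgrad_bdd : ∀ y : EuclideanSpace ℝ (Fin (n+1)), ‖y‖ = 1 →
      0 < d y → d y ≤ δ_u → ‖sproj y (gradient d y)‖ ≤ D_d)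
    -- (iii) the desired vector field points away from the unsafe set
    (hmove : ∀ y : EuclideanSpace ℝ (Fin (n+1)), ‖y‖ = 1 →
      0 < d y → d y ≤ δ_d → μ ≤ ⟪gradient d y, ν y⟫)
    -- (iv) ν is tangent and bounded on the free space
    (hν_tangent : ∀ y : EuclideanSpace ℝ (Fin (n+1)), ‖y‖ = 1 → 0 < d y → ⟪y, ν y⟫ = 0)
    (hν_bdd : ∀ y : EuclideanSpace ℝ (Fin (n+1)), ‖y‖ = 1 → 0 < d y → ‖ν y‖ ≤ D₁)
    -- (v) damping profile
    (hb_eq : ∀ s : ℝ, 0 < s → s ≤ ε₁ → b s = 1 / s)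
    (hb_pos : ∀ s : ℝ, 0 < s → 0 < b s)
    -- (vi) ν differentiable along the trajectory
    (hν_diff : ∀ t : ℝ, 0 ≤ t → DifferentiableAt ℝ ν (x t))
    -- initial condition in the free space M
    (h0_sphere : ‖x 0‖ = 1)
    (h0 : 0 < d (x 0)) :
    ∀ t : ℝ, 0 ≤ t → ‖x t‖ = 1 ∧ 0 < d (x t) :=
  forward_invariance_claim1_general n d ν b μ D_d δ_d δ_u ε₁ k hμ hDd hδd hε₁ hε₁u hk x v hv_cont
    hx_ode hv_ode hd_cont hd_chain hgrad_bdd hmove hν_tangent hb_eq hν_diff h0_sphere h0
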